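/- Let (X,d) be a metric space. Then TB_d(X)⁺-convergence (upper bornological convergence with respect to the bornology of nonempty totally bounded sets) implies upper Wijsman convergence on nonempty closed sets if and only if every proper closed ball in (X,d) is totally bounded. -/

import Mathlib

open Metric Filter

/-!
If some proper ball `closedBall x r` is not totally bounded, pick `p` outside it and, for each
totally bounded `S`, a point `a S` of the ball outside `S`. Along the totally bounded sets directed
by inclusion, `{p, a S}` converges to `{p}` in the `TB⁺` sense, since `a S` escapes every totally
bounded set, but `d(x, {p, a S}) ≤ r < d(x, p)`, so upper Wijsman convergence fails at `x`.

Conversely, if proper balls are totally bounded, apply `TB⁺`-convergence to the ball of radius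
`d(x, A) - ε / 2` about `x`, which is proper because it misses `A`: a point of `Aᵢ` in that ball
lies within `ε / 2` of `A`, hence at distance at least `d(x, A) - ε / 2` from `x`.
-/

section

variable {X : Type*} [MetricSpace X]

/-- `TB_d(X)⁺`-convergence. -/
def UpperTBConverges {ι : Type*} (l : Filter ι) (An : ι → Set X) (A : Set X) : Prop :=
  ∀ S₀ : Set X, S₀.Nonempty → TotallyBounded S₀ →
    ∀ ε > 0, ∀ᶠ i in l, An i ∩ S₀ ⊆ thickening ε A

def UpperWijsmanConverges {ι : Type*} (l : Filter ι) (An : ι → Set X) (A : Set X) : Prop :=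
  ∀ x : X, ∀ ε > 0, ∀ᶠ i in l, infDist x A - infDist x (An i) < ε

instance : IsDirectedOrder {S : Set X // TotallyBounded S} :=
  ⟨fun S T => ⟨⟨S.1 ∪ T.1, S.2.union T.2⟩, Set.subset_union_left, Set.subset_union_right⟩⟩

instance : Nonempty {S : Set X // TotallyBounded S} :=
  ⟨⟨∅, totallyBounded_empty⟩⟩

theorem closedBall_ne_univ_of_lt_infDist {x : X} {A : Set X} (hA : A.Nonempty) {r : ℝ}
    (hr : r < infDist x A) : closedBall x r ≠ Set.univ := by
  obtain ⟨a, ha⟩ := hA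
  exact fun huniv => (hr.trans_le (infDist_le_dist_of_mem ha)).not_ge
    (mem_closedBall'.mp (huniv ▸ Set.mem_univ a))

theorem le_infDist_of_inter_closedBall_subset_thickening {x : X} {s A : Set X} {δ : ℝ}
    (hs : s.Nonempty) (h : s ∩ closedBall x (infDist x A - δ) ⊆ thickening δ A) :
    infDist x A - δ ≤ infDist x s := by
  refine (le_infDist hs).mpr fun y hy => ?_
  by_contra! hlt
  obtain ⟨z, hzA, hyz⟩ := mem_thickening_iff.mp (h ⟨hy, mem_closedBall'.mpr hlt.le⟩)
  linarith [infDist_le_dist_of_mem (x := x) hzA, dist_triangle x y z]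

theorem upperWijsmanConverges_of_upperTBConverges
    (hball : ∀ (x : X) (r : ℝ), closedBall x r ≠ Set.univ → TotallyBounded (closedBall x r))
    {ι : Type*} {l : Filter ι} {An : ι → Set X} {A : Set X} (hAn : ∀ i, (An i).Nonempty)
    (hA : A.Nonempty) (hconv : UpperTBConverges l An A) : UpperWijsmanConverges l An A := by
  intro x ε hε
  have hball_tb : TotallyBounded (insert x (closedBall x (infDist x A - ε / 2))) :=
    (hball x _ (closedBall_ne_univ_of_lt_infDist hA (by linarith))).insert x
  filter_upwards [hconv _ (Set.insert_nonempty _ _) hball_tb (ε / 2) (by linarith)] with i hi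
  have := le_infDist_of_inter_closedBall_subset_thickening (hAn i)
    ((Set.inter_subset_inter_right _ (Set.subset_insert _ _)).trans hi)
  linarith

theorem exists_upperTBConverges_not_upperWijsmanConverges {x : X} {r : ℝ}
    (hproper : closedBall x r ≠ Set.univ) (hnot : ¬TotallyBounded (closedBall x r)) :
    ∃ (An : {S : Set X // TotallyBounded S} → Set X) (A : Set X),
      (∀ S, IsClosed (An S)) ∧ (∀ S, (An S).Nonempty) ∧ IsClosed A ∧ A.Nonempty ∧
      UpperTBConverges atTop An A ∧ ¬UpperWijsmanConverges atTop An A := by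
  obtain ⟨p, hp⟩ := (Set.ne_univ_iff_exists_notMem _).mp hproper
  have hescape (S : {S : Set X // TotallyBounded S}) : ∃ a ∈ closedBall x r, a ∉ S.1 :=
    Set.not_subset.mp fun h => hnot (S.2.subset h)
  choose a ha_ball ha_escape using hescape
  refine ⟨fun S => {p, a S}, {p}, fun S => Set.toFinite _ |>.isClosed, fun S => ⟨p, .inl rfl⟩,
    isClosed_singleton, ⟨p, rfl⟩, ?_, ?_⟩
  · intro S₀ _ hS₀ ε hε
    filter_upwards [eventually_ge_atTop ⟨S₀, hS₀⟩] with S hS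
    rintro z ⟨rfl | rfl, hz⟩
    · exact self_subset_thickening hε _ rfl
    · exact absurd (hS hz) (ha_escape S)
  · intro hwijsman
    have hpr : r < dist x p := by simpa [dist_comm] using hp
    obtain ⟨S, hS⟩ := (hwijsman x (dist x p - r) (by linarith)).exists
    have : infDist x {p, a S} ≤ r :=
      (infDist_le_dist_of_mem (.inr rfl)).trans (mem_closedBall'.mp (ha_ball S))
    rw [infDist_singleton] at hS
    linarith

end

theorem tbPlus_implies_upperWijsman_iff_properBalls_totallyBounded
    {X : Type u} [MetricSpace X] :
    (∀ (ι : Type u) (l : Filter ι) (An : ι → Set X) (A : Set X),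
      (∀ i, IsClosed (An i)) → (∀ i, (An i).Nonempty) →
      IsClosed A → A.Nonempty →
      (∀ S₀ : Set X, S₀.Nonempty → TotallyBounded S₀ →
        ∀ ε > 0, ∀ᶠ i in l, An i ∩ S₀ ⊆ thickening ε A) →
      (∀ x : X, ∀ ε > 0, ∀ᶠ i in l, infDist x A - infDist x (An i) < ε)) ↔
    (∀ (x : X) (r : ℝ), closedBall x r ≠ Set.univ → TotallyBounded (closedBall x r)) := by
  constructor
  · intro H x r hproper
    by_contra hnot
    obtain ⟨An, A, hAn_closed, hAn, hA_closed, hA, hTB, hnotW⟩ :=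
      exists_upperTBConverges_not_upperWijsmanConverges hproper hnot
    exact hnotW (H _ atTop An A hAn_closed hAn hA_closed hA hTB)
  · intro hball ι l An A _ hAn _ hA
    exact upperWijsmanConverges_of_upperTBConverges hball hAn hA
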